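/- arXiv:0810.5571 — 3 statements merged into one kernel-verified Lean document; each statement's English description precedes it below -/
import Mathlib

section
/- Let f be a rational map of degree d ≥ 2 and let E be a finite subset of the Riemann sphere such that every preimage of a point of E is either a point of E or a critical point of f. Then E has at most 4 elements. -/
open Polynomial Filter Set Topology OnePoint

noncomputable section

/-- The map of the Riemann sphere `OnePoint ℂ` induced by the rational function `P/Q`. -/
noncomputable def ratApply (P Q : Polynomial ℂ) : OnePoint ℂ → OnePoint ℂ := fun w =>
  match w with
  | ∞ =>
      if Q.degree < P.degree then ∞
      else if P.degree < Q.degree then ((0 : ℂ) : OnePoint ℂ)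
      else ((P.leadingCoeff / Q.leadingCoeff : ℂ) : OnePoint ℂ)
  | (z : ℂ) => if Q.eval z = 0 then ∞ else ((P.eval z / Q.eval z : ℂ) : OnePoint ℂ)

/-- `f` has local degree `n` at `a`: small neighborhoods of `a` cover nearby values `n` times. -/
def IsLocalDeg (f : OnePoint ℂ → OnePoint ℂ) (a : OnePoint ℂ) (n : ℕ) : Prop :=
  ∀ U ∈ 𝓝 a, ∃ V ∈ 𝓝 a, V ⊆ U ∧ ∀ᶠ w in 𝓝[≠] (f a), (V ∩ f ⁻¹' {w}).ncard = n

/-- A rational map of degree `d`, given by a pair of coprime polynomials. -/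
structure RatMap (d : ℕ) where
  P : Polynomial ℂ
  Q : Polynomial ℂ
  coprime : IsCoprime P Q
  deg : max P.natDegree Q.natDegree = d

/-- The induced self-map of the Riemann sphere. -/
noncomputable def RatMap.toFun {d : ℕ} (F : RatMap d) : OnePoint ℂ → OnePoint ℂ :=
  ratApply F.P F.Q

/-- The set of critical points: points of local degree at least `2`. -/
def critSet (f : OnePoint ℂ → OnePoint ℂ) : Set (OnePoint ℂ) :=
  {a | ∃ n, 2 ≤ n ∧ IsLocalDeg f a n}

end

/-!
Write `F = P / Q` and let `F.mult x` be the multiplicity of `x` in its fiber: a root multiplicity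
of `P - w Q` (or of `Q`) at finite points, and `d` minus the degree of that polynomial at `∞`.
Every fiber has total multiplicity `d`. The total ramification `∑ (mult x - 1)` is at most
`2d - 2` (Riemann–Hurwitz): at a finite point it is bounded by the root multiplicity of the
Wronskian `W = P Q' - P' Q`, and at `∞` by `2d - 2 - deg W`. At a point of multiplicity one the
inverse function theorem makes `F` locally injective, so critical points have multiplicity at
least two and there are at most `2d - 2` of them. For `E` with `k` points this gives
`k d ≤ #F⁻¹(E) + (2d - 2) ≤ k + 2 (2d - 2)`, i.e. `k ≤ 4`.
-/

theorem HasStrictDerivAt.exists_mem_nhds_injOn {𝕜 : Type*} [NontriviallyNormedField 𝕜]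
    [CompleteSpace 𝕜] {g : 𝕜 → 𝕜} {a c : 𝕜} (h : HasStrictDerivAt g c a) (hc : c ≠ 0) :
    ∃ s ∈ 𝓝 a, InjOn g s := by
  have hf := h.hasStrictFDerivAt_equiv hc
  exact ⟨(hf.toOpenPartialHomeomorph g).source,
    (hf.toOpenPartialHomeomorph g).open_source.mem_nhds hf.mem_toOpenPartialHomeomorph_source,
    (hf.toOpenPartialHomeomorph g).injOn⟩

namespace Polynomial

/-- Where the Wronskian does not vanish, `x ↦ [A x : B x]` is locally injective into the
projective line. -/
theorem exists_mem_nhds_eq_of_eval_mul_eval_eq {𝕜 : Type*} [NontriviallyNormedField 𝕜]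
    [CompleteSpace 𝕜] {A B : 𝕜[X]} {a : 𝕜} (h : (wronskian A B).eval a ≠ 0) :
    ∃ s ∈ 𝓝 a, ∀ x ∈ s, ∀ y ∈ s, A.eval x * B.eval y = A.eval y * B.eval x → x = y := by
  wlog hB : B.eval a ≠ 0 generalizing A B
  · have hA : A.eval a ≠ 0 := fun hA => h (by simp [wronskian, hA, not_not.mp hB])
    obtain ⟨s, hs, hinj⟩ := this (by rwa [← wronskian_neg_eq, eval_neg, neg_ne_zero]) hA
    exact ⟨s, hs, fun x hx y hy hxy => hinj x hx y hy (by linear_combination -hxy)⟩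
  have hderiv : HasStrictDerivAt (fun x => A.eval x / B.eval x)
      (-(wronskian A B).eval a / B.eval a ^ 2) a := by
    have hW : -(wronskian A B).eval a =
        (derivative A).eval a * B.eval a - A.eval a * (derivative B).eval a := by
      simp only [wronskian, eval_sub, eval_mul]
      ring
    rw [hW]
    exact (A.hasStrictDerivAt a).div (B.hasStrictDerivAt a) hB
  obtain ⟨s, hs, hinj⟩ := hderiv.exists_mem_nhds_injOn (by simp [h, hB])
  refine ⟨s ∩ {x | B.eval x ≠ 0}, inter_mem hs (B.continuous.continuousAt.eventually_ne hB), ?_⟩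
  rintro x ⟨hxs, hx⟩ y ⟨hys, hy⟩ hxy
  refine hinj hxs hys ?_
  simp only [div_eq_div_iff hx hy]
  linear_combination hxy

theorem rootMultiplicity_sub_one_le_rootMultiplicity_wronskian {K : Type*} [Field K]
    (R S : K[X]) (a : K) (h : wronskian R S ≠ 0) :
    rootMultiplicity a R - 1 ≤ rootMultiplicity a (wronskian R S) := by
  rw [le_rootMultiplicity_iff h]
  have hR : (X - C a) ^ (rootMultiplicity a R) ∣ R := pow_rootMultiplicity_dvd R a
  exact dvd_sub (((pow_dvd_pow _ (Nat.sub_le _ 1)).trans hR).mul_right _)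
    ((pow_sub_one_dvd_derivative_of_pow_dvd hR).mul_right _)

theorem eval_reflect_inv_mul_pow {K : Type*} [Field K] {p : K[X]} {N : ℕ}
    (hp : p.natDegree ≤ N) {x : K} (hx : x ≠ 0) : (reflect N p).eval x⁻¹ * x ^ N = p.eval x := by
  let := invertibleOfNonzero hx
  simpa using eval₂_reflect_mul_pow (RingHom.id K) x N p hp

theorem eval_zero_reflect {R : Type*} [Semiring R] (N : ℕ) (p : R[X]) :
    (reflect N p).eval 0 = p.coeff N := by
  rw [← coeff_zero_eq_eval_zero, coeff_reflect, revAt_le (Nat.zero_le _), Nat.sub_zero]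

theorem eval_zero_wronskian_reflect {R : Type*} [CommRing R] {N : ℕ} (hN : 0 < N) (p q : R[X]) :
    (wronskian (reflect N p) (reflect N q)).eval 0 =
      p.coeff N * q.coeff (N - 1) - p.coeff (N - 1) * q.coeff N := by
  have hderiv : ∀ r : R[X], (derivative (reflect N r)).eval 0 = r.coeff (N - 1) := fun r => by
    rw [← coeff_zero_eq_eval_zero, coeff_derivative, coeff_reflect, revAt_le (by omega)]
    simp
  simp only [wronskian, eval_sub, eval_mul, eval_zero_reflect, hderiv]

end Polynomial

theorem OnePoint.insert_infty_image_preimage_inv_mem_nhds {𝕜 : Type*}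
    [NontriviallyNormedField 𝕜] [ProperSpace 𝕜] {t : Set 𝕜} (ht : t ∈ 𝓝 0) :
    insert ∞ (((↑) : 𝕜 → OnePoint 𝕜) '' ((·⁻¹) ⁻¹' (t \ {0}))) ∈ 𝓝 (∞ : OnePoint 𝕜) := by
  rw [nhds_infty_eq, coclosedCompact_eq_cocompact, ← Metric.cobounded_eq_cocompact]
  refine mem_sup.2 ⟨?_, mem_pure.2 (mem_insert _ _)⟩
  refine mem_map.2 (mem_of_superset ?_ fun y hy => mem_insert_of_mem _ (mem_image_of_mem _ hy))
  exact tendsto_inv₀_cobounded' (sdiff_mem_nhdsWithin_compl ht _)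

theorem eval_mul_eval_eq_of_ratApply_eq {P Q : ℂ[X]} {x y : ℂ}
    (h : ratApply P Q x = ratApply P Q y) : P.eval x * Q.eval y = P.eval y * Q.eval x := by
  simp only [ratApply] at h
  by_cases hx : Q.eval x = 0 <;> by_cases hy : Q.eval y = 0 <;>
    simp only [hx, hy, if_true, if_false, coe_ne_infty, infty_ne_coe, coe_eq_coe] at h ⊢
  · ring
  · rw [div_eq_div_iff hx hy] at h
    linear_combination h

theorem not_injOn_of_mem_critSet {f : OnePoint ℂ → OnePoint ℂ} {a : OnePoint ℂ}
    (ha : a ∈ critSet f) {U : Set (OnePoint ℂ)} (hU : U ∈ 𝓝 a) : ¬ InjOn f U := by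
  intro hinj
  obtain ⟨n, hn, hloc⟩ := ha
  obtain ⟨V, -, hVU, hev⟩ := hloc U hU
  obtain ⟨w, hw⟩ := hev.exists
  have hfin : (V ∩ f ⁻¹' {w}).Finite := finite_of_ncard_pos (by omega)
  obtain ⟨x, y, hx, hy, hxy⟩ := (one_lt_ncard_iff hfin).mp (by omega)
  exact hxy (hinj (hVU hx.1) (hVU hy.1) (hx.2.trans hy.2.symm))

namespace RatMap

variable {d : ℕ} (F : RatMap d)

/-- `F.fiberPoly z / F.cofactor z` is `F` followed by a Möbius map sending `z` to `0`. -/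
noncomputable def fiberPoly (z : OnePoint ℂ) : ℂ[X] := z.elim F.Q fun w => F.P - C w * F.Q

noncomputable def cofactor (z : OnePoint ℂ) : ℂ[X] := z.elim F.P fun _ => F.Q

@[simp] theorem fiberPoly_infty : F.fiberPoly ∞ = F.Q := rfl
@[simp] theorem fiberPoly_coe (w : ℂ) : F.fiberPoly w = F.P - C w * F.Q := rfl
@[simp] theorem cofactor_infty : F.cofactor ∞ = F.P := rfl
@[simp] theorem cofactor_coe (w : ℂ) : F.cofactor w = F.Q := rfl

theorem isCoprime_fiberPoly_cofactor (z : OnePoint ℂ) :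
    IsCoprime (F.fiberPoly z) (F.cofactor z) := by
  induction z using OnePoint.rec with
  | infty => exact F.coprime.symm
  | coe w => exact IsCoprime.sub_mul_right_left_iff.mpr F.coprime

theorem fiberPoly_eval_mul_cofactor_eval_eq_iff (z : OnePoint ℂ) (x y : ℂ) :
    (F.fiberPoly z).eval x * (F.cofactor z).eval y = (F.fiberPoly z).eval y * (F.cofactor z).eval x
      ↔ F.P.eval x * F.Q.eval y = F.P.eval y * F.Q.eval x := by
  induction z using OnePoint.rec with
  | infty =>
    simp only [fiberPoly_infty, cofactor_infty]
    constructor <;> intro h <;> linear_combination -h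
  | coe w =>
    simp only [fiberPoly_coe, cofactor_coe, eval_sub, eval_mul, eval_C]
    constructor <;> intro h <;> linear_combination h

theorem associated_wronskian_fiberPoly_cofactor (z : OnePoint ℂ) :
    Associated (wronskian (F.fiberPoly z) (F.cofactor z)) (wronskian F.P F.Q) := by
  induction z using OnePoint.rec with
  | infty => exact ⟨-1, by rw [Units.val_neg, Units.val_one, mul_neg_one, wronskian_neg_eq]; rfl⟩
  | coe w =>
    have : wronskian (F.P - C w * F.Q) F.Q = wronskian F.P F.Q := by
      simp only [wronskian, derivative_sub, derivative_C_mul]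
      ring
    rw [fiberPoly_coe, cofactor_coe, this]

theorem natDegree_fiberPoly_le (z : OnePoint ℂ) : (F.fiberPoly z).natDegree ≤ d := by
  have := F.deg
  induction z using OnePoint.rec with
  | infty =>
    rw [fiberPoly_infty]
    omega
  | coe w =>
    rw [fiberPoly_coe]
    exact (natDegree_sub_le _ _).trans
      (max_le (by omega) ((natDegree_C_mul_le w _).trans (by omega)))

theorem natDegree_cofactor_le (z : OnePoint ℂ) : (F.cofactor z).natDegree ≤ d := by
  have := F.deg
  induction z using OnePoint.rec with
  | infty => rw [cofactor_infty]; omega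
  | coe w => rw [cofactor_coe]; omega

theorem toFun_coe_eq_iff (a : ℂ) (z : OnePoint ℂ) : F.toFun a = z ↔ (F.fiberPoly z).IsRoot a := by
  have hPQ : F.P.eval a ≠ 0 ∨ F.Q.eval a ≠ 0 := by
    simpa using aeval_ne_zero_of_isCoprime F.coprime a
  induction z using OnePoint.rec with
  | infty => simp [toFun, ratApply]
  | coe w =>
    simp only [toFun, ratApply, fiberPoly_coe, IsRoot.def, eval_sub, eval_mul, eval_C]
    split_ifs with hQ
    · simpa [hQ] using hPQ
    · rw [coe_eq_coe, div_eq_iff hQ, sub_eq_zero]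

theorem coeff_P_ne_zero_or_coeff_Q_ne_zero (hd : 0 < d) : F.P.coeff d ≠ 0 ∨ F.Q.coeff d ≠ 0 := by
  have key : ∀ p : ℂ[X], p.natDegree = d → p.coeff d ≠ 0 := fun p hp => by
    rw [← hp, coeff_natDegree, leadingCoeff_ne_zero]
    rintro rfl
    rw [natDegree_zero] at hp
    omega
  rcases max_choice F.P.natDegree F.Q.natDegree with h | h <;> rw [F.deg] at h
  exacts [.inl (key _ h.symm), .inr (key _ h.symm)]

theorem coeff_fiberPoly_ne_zero_or_coeff_cofactor_ne_zero (hd : 0 < d) (z : OnePoint ℂ) :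
    (F.fiberPoly z).coeff d ≠ 0 ∨ (F.cofactor z).coeff d ≠ 0 := by
  have hPQ := F.coeff_P_ne_zero_or_coeff_Q_ne_zero hd
  induction z using OnePoint.rec with
  | infty => exact hPQ.symm
  | coe w =>
    simp only [fiberPoly_coe, cofactor_coe, coeff_sub, coeff_C_mul]
    by_contra! h
    rcases hPQ with hP | hQ
    exacts [hP (by linear_combination h.1 + w * h.2), hQ h.2]

theorem fiberPoly_ne_zero (hd : 0 < d) (z : OnePoint ℂ) : F.fiberPoly z ≠ 0 := by
  intro h
  have hunit := isCoprime_zero_left.mp (h ▸ F.isCoprime_fiberPoly_cofactor z)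
  have hS := (F.coeff_fiberPoly_ne_zero_or_coeff_cofactor_ne_zero hd z).resolve_left (by simp [h])
  have := le_natDegree_of_ne_zero hS
  rw [natDegree_eq_zero_of_isUnit hunit] at this
  omega

theorem wronskian_ne_zero (hd : 0 < d) : wronskian F.P F.Q ≠ 0 := by
  rw [Ne, F.coprime.wronskian_eq_zero_iff]
  rintro ⟨hP, hQ⟩
  have := F.deg
  rw [derivative_eq_zero.mp hP, derivative_eq_zero.mp hQ] at this
  omega

theorem toFun_infty (hd : 0 < d) :
    F.toFun ∞ = if F.Q.coeff d = 0 then ∞ else ((F.P.coeff d / F.Q.coeff d : ℂ) : OnePoint ℂ) := by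
  have hP : F.P.degree ≤ d := degree_le_of_natDegree_le ((le_max_left _ _).trans_eq F.deg)
  have hQ : F.Q.degree ≤ d := degree_le_of_natDegree_le ((le_max_right _ _).trans_eq F.deg)
  simp only [toFun, ratApply]
  by_cases hQd : F.Q.coeff d = 0
  · have hPd := (F.coeff_P_ne_zero_or_coeff_Q_ne_zero hd).resolve_right (not_not.mpr hQd)
    have hQlt : F.Q.degree < d := by
      refine (degree_lt_iff_coeff_zero _ _).mpr fun m hm => ?_
      rcases hm.eq_or_lt with rfl | hm
      exacts [hQd, coeff_eq_zero_of_degree_lt (hQ.trans_lt (by exact_mod_cast hm))]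
    rw [if_pos hQd, if_pos (degree_eq_of_le_of_coeff_ne_zero hP hPd ▸ hQlt)]
  · have hQeq := degree_eq_of_le_of_coeff_ne_zero hQ hQd
    rw [if_neg hQd, if_neg (by rw [hQeq]; exact hP.not_gt), hQeq]
    split_ifs with hPlt
    · rw [coeff_eq_zero_of_degree_lt hPlt, zero_div]
    · rw [leadingCoeff, leadingCoeff, natDegree_eq_of_degree_eq_some hQeq,
        natDegree_eq_of_degree_eq_some (le_antisymm hP (not_lt.mp hPlt))]

theorem toFun_infty_eq_iff (hd : 0 < d) (z : OnePoint ℂ) :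
    F.toFun ∞ = z ↔ (F.fiberPoly z).coeff d = 0 := by
  have hPQ := F.coeff_P_ne_zero_or_coeff_Q_ne_zero hd
  rw [F.toFun_infty hd]
  induction z using OnePoint.rec with
  | infty => split_ifs <;> simpa
  | coe w =>
    simp only [fiberPoly_coe, coeff_sub, coeff_C_mul]
    split_ifs with hQ
    · simpa [hQ] using hPQ
    · rw [coe_eq_coe, div_eq_iff hQ, sub_eq_zero]

theorem natDegree_fiberPoly_lt_iff (hd : 0 < d) (z : OnePoint ℂ) :
    (F.fiberPoly z).natDegree < d ↔ F.toFun ∞ = z := by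
  rw [F.toFun_infty_eq_iff hd]
  refine ⟨coeff_eq_zero_of_natDegree_lt, fun h => (F.natDegree_fiberPoly_le z).lt_of_ne ?_⟩
  intro heq
  exact F.fiberPoly_ne_zero hd z (leadingCoeff_eq_zero.mp (by rw [leadingCoeff, heq, h]))

/-- The multiplicity of `x` as a preimage of `F x`. At `∞` it is the order of vanishing at `∞` of
the fiber polynomial read as a polynomial of degree `d`. -/
noncomputable def mult (x : OnePoint ℂ) : ℕ :=
  x.elim (d - (F.fiberPoly (F.toFun ∞)).natDegree) fun a =>
    rootMultiplicity a (F.fiberPoly (F.toFun a))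

@[simp] theorem mult_infty : F.mult ∞ = d - (F.fiberPoly (F.toFun ∞)).natDegree := rfl
@[simp] theorem mult_coe (a : ℂ) : F.mult a = rootMultiplicity a (F.fiberPoly (F.toFun a)) := rfl

open scoped Classical in
noncomputable def fiber (z : OnePoint ℂ) : Finset (OnePoint ℂ) :=
  {x ∈ insert ∞ ((F.fiberPoly z).roots.toFinset.map ⟨(↑), coe_injective⟩) | F.toFun x = z}

theorem mem_fiber (hd : 0 < d) {x z : OnePoint ℂ} : x ∈ F.fiber z ↔ F.toFun x = z := by
  classical
  simp only [fiber, Finset.mem_filter, and_iff_right_iff_imp]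
  intro hx
  induction x using OnePoint.rec with
  | infty => exact Finset.mem_insert_self _ _
  | coe a =>
    refine Finset.mem_insert_of_mem (Finset.mem_map_of_mem _ ?_)
    rw [Multiset.mem_toFinset, mem_roots (F.fiberPoly_ne_zero hd z), ← F.toFun_coe_eq_iff]
    exact hx

theorem sum_mult_fiber (hd : 0 < d) (z : OnePoint ℂ) : ∑ x ∈ F.fiber z, F.mult x = d := by
  classical
  have hR0 := F.fiberPoly_ne_zero hd z
  have hroots : ∑ a ∈ (F.fiberPoly z).roots.toFinset,
      (if F.toFun a = z then F.mult a else 0) = (F.fiberPoly z).natDegree := by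
    rw [← IsAlgClosed.card_roots_eq_natDegree, ← Multiset.toFinset_sum_count_eq]
    refine Finset.sum_congr rfl fun a ha => ?_
    have hfa : F.toFun a = z :=
      (F.toFun_coe_eq_iff a z).mpr ((mem_roots hR0).mp (Multiset.mem_toFinset.mp ha))
    rw [if_pos hfa, mult_coe, hfa, count_roots]
  rw [fiber, Finset.sum_filter, Finset.sum_insert (by simp), Finset.sum_map]
  simp only [Function.Embedding.coeFn_mk]
  rw [hroots]
  have hle := F.natDegree_fiberPoly_le z
  split_ifs with h
  · subst h
    rw [mult_infty]
    omega
  · have := (F.natDegree_fiberPoly_lt_iff hd z).not.mpr h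
    omega

theorem rootMultiplicity_fiberPoly_sub_one_le (hd : 0 < d) (a : ℂ) (z : OnePoint ℂ) :
    rootMultiplicity a (F.fiberPoly z) - 1 ≤ rootMultiplicity a (wronskian F.P F.Q) := by
  have hW := F.associated_wronskian_fiberPoly_cofactor z
  have hW0 := F.wronskian_ne_zero hd
  refine (rootMultiplicity_sub_one_le_rootMultiplicity_wronskian _ _ a
    (hW.ne_zero_iff.mpr hW0)).trans ?_
  rw [le_rootMultiplicity_iff hW0, ← hW.dvd_iff_dvd_right]
  exact pow_rootMultiplicity_dvd _ _

theorem mult_infty_sub_one_add_natDegree_wronskian_le (hd : 0 < d) :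
    F.mult ∞ - 1 + (wronskian F.P F.Q).natDegree ≤ 2 * d - 2 := by
  have hW := F.associated_wronskian_fiberPoly_cofactor (F.toFun ∞)
  have hlt := natDegree_wronskian_lt_add (hW.ne_zero_iff.mpr (F.wronskian_ne_zero hd))
  rw [natDegree_eq_of_degree_eq (degree_eq_degree_of_associated hW)] at hlt
  have hR := (F.natDegree_fiberPoly_lt_iff hd (F.toFun ∞)).mpr rfl
  have hS := F.natDegree_cofactor_le (F.toFun ∞)
  rw [mult_infty]
  omega

theorem sum_mult_sub_one_le (hd : 0 < d) (S : Finset (OnePoint ℂ)) :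
    ∑ x ∈ S, (F.mult x - 1) ≤ 2 * d - 2 := by
  classical
  set W := wronskian F.P F.Q
  let bound : OnePoint ℂ → ℕ := fun x => x.elim (F.mult ∞ - 1) fun a => rootMultiplicity a W
  calc ∑ x ∈ S, (F.mult x - 1)
      ≤ ∑ x ∈ S, bound x := Finset.sum_le_sum fun x _ => by
        induction x using OnePoint.rec with
        | infty => exact le_rfl
        | coe a => exact F.rootMultiplicity_fiberPoly_sub_one_le hd a _
    _ ≤ ∑ x ∈ insert ∞ (W.roots.toFinset.map ⟨(↑), coe_injective⟩), bound x := by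
        refine Finset.sum_le_sum_of_ne_zero fun x _ hx => ?_
        induction x using OnePoint.rec with
        | infty => exact Finset.mem_insert_self _ _
        | coe a =>
          refine Finset.mem_insert_of_mem (Finset.mem_map_of_mem _ ?_)
          rw [Multiset.mem_toFinset, mem_roots (F.wronskian_ne_zero hd)]
          exact (rootMultiplicity_pos (F.wronskian_ne_zero hd)).mp (Nat.pos_of_ne_zero hx)
    _ = F.mult ∞ - 1 + W.natDegree := by
        rw [Finset.sum_insert (by simp), Finset.sum_map, ← IsAlgClosed.card_roots_eq_natDegree,
          ← Multiset.toFinset_sum_count_eq]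
        simp [bound, count_roots]
    _ ≤ 2 * d - 2 := F.mult_infty_sub_one_add_natDegree_wronskian_le hd

theorem exists_mem_nhds_injOn_coe (hd : 0 < d) {a : ℂ} (ha : F.mult a ≤ 1) :
    ∃ U ∈ 𝓝 (a : OnePoint ℂ), InjOn F.toFun U := by
  set R := F.fiberPoly (F.toFun a)
  set S := F.cofactor (F.toFun a)
  have hRa : R.IsRoot a := (F.toFun_coe_eq_iff a _).mp rfl
  have hR'a : (derivative R).eval a ≠ 0 := fun h => (not_lt.mpr ha)
    ((one_lt_rootMultiplicity_iff_isRoot (F.fiberPoly_ne_zero hd _)).mpr ⟨hRa, h⟩)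
  have hSa : S.eval a ≠ 0 := by
    have := aeval_ne_zero_of_isCoprime (F.isCoprime_fiberPoly_cofactor (F.toFun a)) a
    simp only [coe_aeval_eq_eval] at this
    exact this.resolve_left (not_not.mpr hRa)
  have hW : (wronskian R S).eval a ≠ 0 := by simp [wronskian, hRa.eq_zero, hR'a, hSa]
  obtain ⟨s, hs, hinj⟩ := exists_mem_nhds_eq_of_eval_mul_eval_eq hW
  refine ⟨(↑) '' s, by rw [nhds_coe_eq]; exact image_mem_map hs, InjOn.image_of_comp ?_⟩
  intro x hx y hy hxy
  exact hinj x hx y hy ((F.fiberPoly_eval_mul_cofactor_eval_eq_iff _ x y).mpr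
    (eval_mul_eval_eq_of_ratApply_eq hxy))

/-- In the coordinate `y = x⁻¹` near `∞`, `F` is given by the pair of `d`-reflections of its
fiber polynomial and cofactor at `F ∞`. -/
theorem exists_mem_nhds_injOn_infty (hd : 0 < d) (h : F.mult ∞ ≤ 1) :
    ∃ U ∈ 𝓝 (∞ : OnePoint ℂ), InjOn F.toFun U := by
  have hRdeg : (F.fiberPoly (F.toFun ∞)).natDegree = d - 1 := by
    have := (F.natDegree_fiberPoly_lt_iff hd _).mpr rfl
    rw [mult_infty] at h
    omega
  set R := F.fiberPoly (F.toFun ∞)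
  set S := F.cofactor (F.toFun ∞)
  have hRd : R.coeff d = 0 := (F.toFun_infty_eq_iff hd _).mp rfl
  have hW : (wronskian (reflect d R) (reflect d S)).eval 0 ≠ 0 := by
    have hRd1 : R.coeff (d - 1) ≠ 0 := by
      rw [← hRdeg, coeff_natDegree, leadingCoeff_ne_zero]
      exact F.fiberPoly_ne_zero hd _
    have hSd : S.coeff d ≠ 0 :=
      (F.coeff_fiberPoly_ne_zero_or_coeff_cofactor_ne_zero hd _).resolve_left (not_not.mpr hRd)
    rw [eval_zero_wronskian_reflect hd, hRd, zero_mul, zero_sub, neg_ne_zero]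
    exact mul_ne_zero hRd1 hSd
  obtain ⟨t, ht, hinj⟩ := exists_mem_nhds_eq_of_eval_mul_eval_eq hW
  have hR : ∀ y : ℂ, y ≠ 0 → (reflect d R).eval y⁻¹ * y ^ d = R.eval y := fun y hy =>
    eval_reflect_inv_mul_pow (F.natDegree_fiberPoly_le _) hy
  have hS : ∀ y : ℂ, y ≠ 0 → (reflect d S).eval y⁻¹ * y ^ d = S.eval y := fun y hy =>
    eval_reflect_inv_mul_pow (F.natDegree_cofactor_le _) hy
  refine ⟨_, OnePoint.insert_infty_image_preimage_inv_mem_nhds ht, ?_⟩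
  rw [injOn_insert (by simp)]
  refine ⟨InjOn.image_of_comp ?_, ?_⟩
  · rintro x ⟨hxt, hx0⟩ y ⟨hyt, hy0⟩ hxy
    have hx : x ≠ 0 := by simpa using hx0
    have hy : y ≠ 0 := by simpa using hy0
    have hcross := (F.fiberPoly_eval_mul_cofactor_eval_eq_iff (F.toFun ∞) x y).mpr
      (eval_mul_eval_eq_of_ratApply_eq hxy)
    rw [← hR x hx, ← hS y hy, ← hR y hy, ← hS x hx] at hcross
    refine inv_inj.mp (hinj _ hxt _ hyt (mul_right_cancel₀ (b := x ^ d * y ^ d)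
      (mul_ne_zero (pow_ne_zero d hx) (pow_ne_zero d hy)) ?_))
    linear_combination hcross
  · rintro ⟨_, ⟨y, ⟨hyt, hy0⟩, rfl⟩, hfy⟩
    have hy : y ≠ 0 := by simpa using hy0
    have hRy : R.eval y = 0 := (F.toFun_coe_eq_iff y _).mp hfy
    have hRy' : (reflect d R).eval y⁻¹ = 0 := by simpa [hy, hRy] using hR y hy
    refine hy0 (hinj 0 (mem_of_mem_nhds ht) _ hyt ?_).symm
    rw [eval_zero_reflect, hRd, hRy', zero_mul, zero_mul]

theorem one_lt_mult_of_mem_critSet (hd : 0 < d) {x : OnePoint ℂ}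
    (hx : x ∈ critSet F.toFun) : 1 < F.mult x := by
  by_contra! h
  obtain ⟨U, hU, hinj⟩ : ∃ U ∈ 𝓝 x, InjOn F.toFun U := by
    induction x using OnePoint.rec with
    | infty => exact F.exists_mem_nhds_injOn_infty hd h
    | coe a => exact F.exists_mem_nhds_injOn_coe hd h
  exact not_injOn_of_mem_critSet hx hU hinj

theorem critSet_subset (hd : 0 < d) :
    critSet F.toFun ⊆ insert ∞ ((↑) '' {a : ℂ | (wronskian F.P F.Q).IsRoot a}) := by
  intro x hx
  have hmult := F.one_lt_mult_of_mem_critSet hd hx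
  induction x using OnePoint.rec with
  | infty => exact mem_insert _ _
  | coe a =>
    refine mem_insert_of_mem _ (mem_image_of_mem _ ?_)
    have := F.rootMultiplicity_fiberPoly_sub_one_le hd a (F.toFun a)
    rw [mult_coe] at hmult
    exact (rootMultiplicity_pos (F.wronskian_ne_zero hd)).mp (by omega)

theorem critSet_finite (hd : 0 < d) : (critSet F.toFun).Finite :=
  (((finite_setOfPred_isRoot (F.wronskian_ne_zero hd)).image _).insert ∞).subset
    (F.critSet_subset hd)

theorem ncard_critSet_le (hd : 0 < d) : (critSet F.toFun).ncard ≤ 2 * d - 2 := by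
  have hfin := F.critSet_finite hd
  rw [ncard_eq_toFinset_card _ hfin, Finset.card_eq_sum_ones]
  refine (Finset.sum_le_sum fun x hx => ?_).trans (F.sum_mult_sub_one_le hd _)
  have := F.one_lt_mult_of_mem_critSet hd (hfin.mem_toFinset.mp hx)
  omega

theorem card_mul_le_ncard_preimage_add (hd : 0 < d) (T : Finset (OnePoint ℂ)) :
    T.card * d ≤ (F.toFun ⁻¹' T).ncard + (2 * d - 2) := by
  classical
  have hdisj : (T : Set (OnePoint ℂ)).PairwiseDisjoint F.fiber := fun z _ w _ hzw =>
    Finset.disjoint_left.mpr fun x hz hw =>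
      hzw (((F.mem_fiber hd).mp hz).symm.trans ((F.mem_fiber hd).mp hw))
  have hpre : F.toFun ⁻¹' T = ↑(T.biUnion F.fiber) := by
    ext x
    simp [F.mem_fiber hd]
  rw [hpre, ncard_coe_finset]
  calc T.card * d = ∑ z ∈ T, ∑ x ∈ F.fiber z, F.mult x := by simp [F.sum_mult_fiber hd]
    _ = ∑ x ∈ T.biUnion F.fiber, F.mult x := (Finset.sum_biUnion hdisj).symm
    _ ≤ ∑ x ∈ T.biUnion F.fiber, (1 + (F.mult x - 1)) := Finset.sum_le_sum fun x _ => by omega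
    _ ≤ (T.biUnion F.fiber).card + (2 * d - 2) := by
      rw [Finset.sum_add_distrib, Finset.card_eq_sum_ones]
      exact Nat.add_le_add_left (F.sum_mult_sub_one_le hd _) _

end RatMap

/-- If `E` is a finite set on the Riemann sphere such that every preimage of a point of `E`
under a rational map of degree `d ≥ 2` is either in `E` or a critical point, then `#E ≤ 4`. -/
theorem branch_exceptional_card_le_four {d : ℕ} (hd : 2 ≤ d) (F : RatMap d)
    (E : Set (OnePoint ℂ)) (hE : E.Finite)
    (hpre : F.toFun ⁻¹' E ⊆ E ∪ critSet F.toFun) :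
    E.ncard ≤ 4 := by
  obtain ⟨T, rfl⟩ := hE.exists_finset_coe
  have hd0 : 0 < d := by omega
  have hlower := F.card_mul_le_ncard_preimage_add hd0 T
  have hupper : (F.toFun ⁻¹' T).ncard ≤ T.card + (2 * d - 2) :=
    calc (F.toFun ⁻¹' T).ncard
        ≤ ((T : Set (OnePoint ℂ)) ∪ critSet F.toFun).ncard :=
          ncard_le_ncard hpre (T.finite_toSet.union (F.critSet_finite hd0))
      _ ≤ T.card + (critSet F.toFun).ncard :=
          (ncard_union_le _ _).trans_eq (by rw [ncard_coe_finset])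
      _ ≤ T.card + (2 * d - 2) := Nat.add_le_add_left (F.ncard_critSet_le hd0) _
  rw [ncard_coe_finset]
  have h2d : 2 * d - 2 + 2 = 2 * d := by omega
  nlinarith
end

section
/- Let f_λ(z) = z·(z − 1)/(z² − z − 1/λ) with λ ∈ ℂ∖{0} be a quadratic rational map. Then ∞ is a critical point of f_λ, and every backward orbit of the fixed point 0 under f_λ that is not the constant orbit (0 ← 0 ← 0 ← …) passes through the point ∞; in particular 0 has only finitely many backward orbits avoiding all critical points. -/
/-!
Write `c = 1 / λ`. For `w ≠ 1` the fibre of `f_λ` over `w` is the root set of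
`z² - z = w c / (w - 1)`. As `w → 1` the right-hand side tends to infinity, so for `w` near `1`
the fibre consists of two distinct points, both outside any given compact set; since
`f_λ(∞) = 1`, this makes `∞` a point of local degree `2`. The fibre over `0` is `{0, 1}` and
the fibre over `1` is `{∞}`, so a backward orbit of `0` that ever leaves `0` goes to `1` and then
to `∞`; as `∞` is critical, only the constant orbit avoids the critical points.
-/

open Polynomial Filter Set Topology OnePoint

open Bornology

section BackwardOrbit

variable {α : Type*}

def IsBackwardOrbit (f : α → α) (z : ℕ → α) : Prop :=
  ∀ k, f (z (k + 1)) = z k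

theorem IsBackwardOrbit.exists_eq_of_ne_const {f : α → α} {a b p : α}
    (ha : f ⁻¹' {a} ⊆ {a, b}) (hb : f ⁻¹' {b} ⊆ {p}) {z : ℕ → α}
    (hz : IsBackwardOrbit f z) (h0 : z 0 = a) (hne : z ≠ fun _ => a) : ∃ k, z k = p := by
  by_contra! hp
  refine hne (funext fun k => ?_)
  induction k with
  | zero => exact h0
  | succ k ih =>
    rcases ha ((hz k).trans ih) with h | h
    · exact h
    · exact absurd (hb ((hz (k + 1)).trans h)) (hp (k + 2))

end BackwardOrbit

theorem OnePoint.nhdsNE_coe {X : Type*} [TopologicalSpace X] (x : X) :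
    𝓝[≠] (x : OnePoint X) = map (↑) (𝓝[≠] x) := by
  rw [OnePoint.nhdsWithin_coe, Set.preimage_compl, ← Set.image_singleton,
    OnePoint.coe_injective.preimage_image]

theorem eventually_preimage_subset_cobounded {α β : Type*} [PseudoMetricSpace α] [ProperSpace α]
    [PseudoMetricSpace β] {g : α → β} (hg : Continuous g) {S : Set α}
    (hS : S ∈ cobounded α) :
    ∀ᶠ t in cobounded β, g ⁻¹' {t} ⊆ S := by
  have hK : IsCompact (closure Sᶜ) :=
    (by rwa [isBounded_def, compl_compl] : IsBounded Sᶜ).isCompact_closure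
  filter_upwards [isBounded_def.1 (hK.image hg).isBounded] with t ht x hx
  by_contra hxS
  exact ht ⟨x, subset_closure hxS, hx⟩

theorem ncard_setOf_sq_sub_self_eq {K : Type*} [Field K] [IsAlgClosed K] [NeZero (2 : K)]
    {t : K} (ht : 1 + 4 * t ≠ 0) : {z : K | z ^ 2 - z = t}.ncard = 2 := by
  obtain ⟨s, hs⟩ := IsAlgClosed.exists_eq_mul_self (1 + 4 * t)
  have hdisc : discrim 1 (-1) (-t) = s * s := by rw [discrim, ← hs]; ring
  have hroots : {z : K | z ^ 2 - z = t} = {(1 + s) / 2, (1 - s) / 2} := by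
    ext z
    change z ^ 2 - z = t ↔ _
    rw [← sub_eq_zero, show z ^ 2 - z - t = 1 * (z * z) + -1 * z + -t by ring,
      quadratic_eq_zero_iff one_ne_zero hdisc z]
    norm_num
  have hs0 : s ≠ 0 := by rintro rfl; exact ht (by simpa using hs)
  rw [hroots, Set.ncard_pair]
  rw [Ne, div_left_inj' two_ne_zero]
  intro h
  have h2s : (2 : K) * s = 0 := by linear_combination h
  exact hs0 ((mul_eq_zero.1 h2s).resolve_left two_ne_zero)

theorem tendsto_mul_div_sub_one_cobounded {𝕜 : Type*} [NormedField 𝕜] {c : 𝕜}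
    (hc : c ≠ 0) :
    Tendsto (fun w : 𝕜 => w * c / (w - 1)) (𝓝[≠] 1) (cobounded 𝕜) := by
  have hsub : Tendsto (fun w : 𝕜 => w - 1) (𝓝[≠] 1) (𝓝[≠] 0) :=
    tendsto_nhdsWithin_iff.2
      ⟨by simpa using ((continuous_sub_right (1 : 𝕜)).tendsto 1).mono_left nhdsWithin_le_nhds,
        eventually_mem_nhdsWithin.mono fun w hw => sub_ne_zero.2 hw⟩
  refine ((tendsto_mul_left_cobounded hc).comp ((tendsto_add_const_cobounded 1).comp
    (tendsto_inv₀_nhdsNE_zero.comp hsub))).congr' ?_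
  filter_upwards [self_mem_nhdsWithin] with w hw
  have hw₁ : w - 1 ≠ 0 := sub_ne_zero.2 hw
  simp only [Function.comp_apply]
  field_simp
  ring

/-- The map `f_λ` of the statement, with `c = 1 / λ`. -/
noncomputable def quadMap (c : ℂ) : OnePoint ℂ → OnePoint ℂ :=
  ratApply (X ^ 2 - X) (X ^ 2 - X - C c)

section QuadMap

variable {c : ℂ}

theorem quadMap_infty : quadMap c ∞ = ((1 : ℂ) : OnePoint ℂ) := by
  have hP : (X ^ 2 - X : ℂ[X]).degree = 2 := by compute_degree!
  have hQ : (X ^ 2 - X - C c).degree = 2 := by compute_degree!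
  have hP₁ : (X ^ 2 - X : ℂ[X]).Monic := by monicity!
  have hQ₁ : (X ^ 2 - X - C c).Monic := by monicity!
  simp [quadMap, ratApply, hP, hQ, hP₁.leadingCoeff, hQ₁.leadingCoeff]

theorem quadMap_coe (z : ℂ) : quadMap c z =
    if z ^ 2 - z - c = 0 then ∞ else (((z ^ 2 - z) / (z ^ 2 - z - c) : ℂ) : OnePoint ℂ) := by
  simp [quadMap, ratApply]

theorem preimage_quadMap_coe (hc : c ≠ 0) {w : ℂ} (hw : w ≠ 1) :
    quadMap c ⁻¹' {(w : OnePoint ℂ)} = (↑) '' {z : ℂ | z ^ 2 - z = w * c / (w - 1)} := by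
  have hw₁ : w - 1 ≠ 0 := sub_ne_zero.2 hw
  ext x
  induction x using OnePoint.rec with
  | infty => simp [quadMap_infty, Ne.symm hw]
  | coe z =>
    rw [Set.mem_preimage, OnePoint.coe_injective.mem_set_image, Set.mem_singleton_iff,
      quadMap_coe]
    change _ ↔ z ^ 2 - z = _
    rw [eq_div_iff hw₁]
    split_ifs with hz
    · simp only [OnePoint.infty_ne_coe, false_iff]
      intro h
      exact hc (by linear_combination (w - 1) * hz - h)
    · rw [OnePoint.coe_eq_coe, div_eq_iff hz]
      constructor <;> intro h <;> linear_combination -h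

theorem preimage_quadMap_zero (hc : c ≠ 0) :
    quadMap c ⁻¹' {((0 : ℂ) : OnePoint ℂ)} =
      {((0 : ℂ) : OnePoint ℂ), ((1 : ℂ) : OnePoint ℂ)} := by
  have hroots : {z : ℂ | z ^ 2 - z = 0 * c / (0 - 1)} = {0, 1} := by
    ext z
    simp [sq, ← mul_sub_one, sub_eq_zero]
  rw [preimage_quadMap_coe hc zero_ne_one, hroots, Set.image_pair]

theorem preimage_quadMap_one (hc : c ≠ 0) :
    quadMap c ⁻¹' {((1 : ℂ) : OnePoint ℂ)} = {∞} := by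
  ext x
  induction x using OnePoint.rec with
  | infty => simp [quadMap_infty]
  | coe z =>
    simp only [Set.mem_preimage, Set.mem_singleton_iff, OnePoint.coe_ne_infty, iff_false,
      quadMap_coe]
    split_ifs with hz
    · exact OnePoint.infty_ne_coe _
    · rw [OnePoint.coe_eq_coe, div_eq_one_iff_eq hz]
      intro h
      exact hc (by linear_combination h)

theorem isLocalDeg_quadMap_infty (hc : c ≠ 0) : IsLocalDeg (quadMap c) ∞ 2 := by
  intro U hU
  refine ⟨U, hU, subset_rfl, ?_⟩
  have hUc : ((↑) : ℂ → OnePoint ℂ) ⁻¹' U ∈ cobounded ℂ := by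
    rw [Metric.cobounded_eq_cocompact, ← coclosedCompact_eq_cocompact,
      ← OnePoint.comap_coe_nhds_infty]
    exact preimage_mem_comap hU
  have ht := tendsto_mul_div_sub_one_cobounded hc
  rw [quadMap_infty, OnePoint.nhdsNE_coe, eventually_map]
  filter_upwards [self_mem_nhdsWithin,
    ht.eventually (eventually_preimage_subset_cobounded (g := fun z : ℂ => z ^ 2 - z)
      (by fun_prop) hUc),
    ht.eventually (eventually_ne_cobounded (-4⁻¹))] with w hw hsub hne
  have hdisc : 1 + 4 * (w * c / (w - 1)) ≠ 0 := fun h => hne (by linear_combination h / 4)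
  rw [preimage_quadMap_coe hc hw, Set.inter_eq_right.2 ?_,
    Set.ncard_image_of_injective _ OnePoint.coe_injective, ncard_setOf_sq_sub_self_eq hdisc]
  exact Set.image_subset_iff.2 hsub

end QuadMap

/-- For the quadratic rational map `f_λ(z) = z(z−1)/(z² − z − 1/λ)` (`λ ≠ 0`): `∞` is a
critical point of `f_λ`, every backward orbit of the fixed point `0` other than the constant
orbit passes through `∞`, and in particular `0` has only finitely many backward orbits
avoiding all critical points. -/
theorem f_lambda_branch_exceptional (lam : ℂ) (hlam : lam ≠ 0)
    (f : OnePoint ℂ → OnePoint ℂ)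
    (hf : f = ratApply (X ^ 2 - X) (X ^ 2 - X - C (1 / lam))) :
    (∞ : OnePoint ℂ) ∈ critSet f ∧
    (∀ zhat : ℕ → OnePoint ℂ, zhat 0 = ((0 : ℂ) : OnePoint ℂ) →
      (∀ k, f (zhat (k + 1)) = zhat k) →
      zhat ≠ (fun _ => ((0 : ℂ) : OnePoint ℂ)) → ∃ k, zhat k = ∞) ∧
    {zhat : ℕ → OnePoint ℂ | zhat 0 = ((0 : ℂ) : OnePoint ℂ) ∧
      (∀ k, f (zhat (k + 1)) = zhat k) ∧ ∀ k, 1 ≤ k → zhat k ∉ critSet f}.Finite := by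
  obtain rfl : f = quadMap (1 / lam) := hf
  have hc : 1 / lam ≠ 0 := one_div_ne_zero hlam
  have hcrit : ∞ ∈ critSet (quadMap (1 / lam)) := ⟨2, le_rfl, isLocalDeg_quadMap_infty hc⟩
  have horbit : ∀ zhat : ℕ → OnePoint ℂ, zhat 0 = ((0 : ℂ) : OnePoint ℂ) →
      IsBackwardOrbit (quadMap (1 / lam)) zhat →
      zhat ≠ (fun _ => ((0 : ℂ) : OnePoint ℂ)) → ∃ k, zhat k = ∞ :=
    fun _ h0 hz hne => hz.exists_eq_of_ne_const (preimage_quadMap_zero hc).subset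
      (preimage_quadMap_one hc).subset h0 hne
  refine ⟨hcrit, horbit, (Set.finite_singleton fun _ => ((0 : ℂ) : OnePoint ℂ)).subset ?_⟩
  rintro zhat ⟨h0, hz, havoid⟩
  by_contra hne
  obtain ⟨k, hk⟩ := horbit zhat h0 hz hne
  have hk₁ : 1 ≤ k := Nat.one_le_iff_ne_zero.2 <| by
    rintro rfl
    exact OnePoint.coe_ne_infty _ (h0 ▸ hk)
  exact havoid k hk₁ (hk ▸ hcrit)
end

section
/- Let p be a quadratic polynomial p(z) = z² + c with connected Julia set, and let β be its repelling fixed point with Koenigs linearization φ : ℂ → ℂ satisfying φ(0) = β and p(φ(z)) = φ(λz), where λ = p'(β), |λ| > 1. Then the map Φ : ℂ → N_p sending z to the backward orbit (φ(z), φ(z/λ), φ(z/λ²), …) is a well-defined continuous injection whose image is a path-connected subset of the natural extension consisting of regular backward orbits; in particular the leaf of the invariant lift of β is a parabolic Riemann surface (conformally ℂ). -/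
open Filter Set Topology

/-- The natural extension (inverse limit) of the dynamical system `(X, f)`: the space of
backward orbits `(z₀, z₋₁, z₋₂, …)` with `f(z₋ₖ₋₁) = z₋ₖ`, topologized as a subspace of the
product `X^ℕ`. -/
abbrev NatExt {X : Type*} (f : X → X) : Type _ :=
  {z : ℕ → X // ∀ k, f (z (k + 1)) = z k}

/-- The natural extension map `f̂(z₀, z₋₁, …) = (f(z₀), z₀, z₋₁, …)`. -/
def natExtMap {X : Type*} (f : X → X) (z : NatExt f) : NatExt f :=
  ⟨fun k => Nat.casesOn k (f (z.1 0)) fun n => z.1 n, by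
    intro k
    cases k with
    | zero => rfl
    | succ n => exact z.2 n⟩

/-- The shift map `(z₀, z₋₁, z₋₂, …) ↦ (z₋₁, z₋₂, …)` on the natural extension. -/
def natExtShift {X : Type*} (f : X → X) (z : NatExt f) : NatExt f :=
  ⟨fun k => z.1 (k + 1), fun k => z.2 (k + 1)⟩

/-- The filled Julia set of a polynomial map: points with bounded forward orbit. -/
def filledJulia (p : ℂ → ℂ) : Set ℂ :=
  {z | Bornology.IsBounded (Set.range fun n : ℕ => p^[n] z)}

/-- A backward orbit is regular: some connected open neighborhood of its initial point
pulls back along the orbit univalently for all sufficiently large steps. -/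
def IsRegularOrbit (f : ℂ → ℂ) (z : ℕ → ℂ) : Prop :=
  ∃ U : Set ℂ, IsOpen U ∧ IsConnected U ∧ z 0 ∈ U ∧
    ∃ N : ℕ, ∀ k ≥ N, Set.InjOn f (connectedComponentIn (f^[k + 1] ⁻¹' U) (z (k + 1)))


/-!
Since `p (φ (z / λ ^ (k + 1))) = φ (z / λ ^ k)`, the sequence `φ (z / λ ^ k)` is a backward orbit,
and it tends to `β` because `z / λ ^ k → 0`. Continuity of `Φ` is coordinatewise, and
injectivity follows by applying the local inverse of `φ` at `0` (where `φ' = 1`) in a deep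
enough coordinate.

Regularity only uses that the orbit converges to `β`, with `‖β‖ > 1/2` since `λ = 2β`. From
`p x - β = (x - β) (x + β)`, the preimage of a small disc `D` around `β` splits into a piece near
`β` and a piece near `-β`, and `p` is injective near `β`. Hence a connected set mapped into `D`
that meets `D` lies in `D`. Since the preimages of a point under the nonconstant map `p^[N]` are
isolated, the pull-back component at `z N` of a small enough disc around `z 0` lies in `D`; then
so do all later pull-back components, and `p` is injective on each of them.
-/

open Metric

section BackwardOrbit

variable {X : Type*} {f : X → X} {z : ℕ → X}

theorem iterate_apply_of_backwardOrbit (hz : ∀ k, f (z (k + 1)) = z k) (k : ℕ) :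
    f^[k] (z k) = z 0 := by
  induction k with
  | zero => rfl
  | succ k ih => rw [Function.iterate_succ_apply, hz k, ih]

theorem mapsTo_connectedComponentIn_preimage_iterate_succ [TopologicalSpace X]
    (hf : Continuous f) {U : Set X} {x : X} {k : ℕ} (hx : x ∈ f^[k + 1] ⁻¹' U) :
    MapsTo f (connectedComponentIn (f^[k + 1] ⁻¹' U) x)
      (connectedComponentIn (f^[k] ⁻¹' U) (f x)) := by
  rw [Function.iterate_succ, preimage_comp] at hx ⊢
  exact (hf.continuousOn.mapsTo_connectedComponentIn hx).mono_right
    (connectedComponentIn_mono _ (image_preimage_subset _ _))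

end BackwardOrbit

theorem isRegularOrbit_of_mapsTo_trap {f : ℂ → ℂ} {z : ℕ → ℂ} {U W : Set ℂ} {N : ℕ}
    (hf : Continuous f) (hz : ∀ k, f (z (k + 1)) = z k)
    (hU : IsOpen U) (hUc : IsConnected U) (hzU : z 0 ∈ U) (hinj : InjOn f W)
    (htrap : ∀ C : Set ℂ, IsPreconnected C → (C ∩ W).Nonempty → MapsTo f C W → C ⊆ W)
    (hzW : ∀ k ≥ N, z k ∈ W) (hN : connectedComponentIn (f^[N] ⁻¹' U) (z N) ⊆ W) :
    IsRegularOrbit f z := by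
  have hmem : ∀ k, z k ∈ f^[k] ⁻¹' U := fun k => by
    rwa [mem_preimage, iterate_apply_of_backwardOrbit hz]
  have hsub : ∀ k ≥ N, connectedComponentIn (f^[k] ⁻¹' U) (z k) ⊆ W := by
    intro k hk
    induction k, hk using Nat.le_induction with
    | base => exact hN
    | succ k hk ih =>
      have hmaps := mapsTo_connectedComponentIn_preimage_iterate_succ hf (hmem (k + 1))
      rw [hz] at hmaps
      exact htrap _ isPreconnected_connectedComponentIn
        ⟨z (k + 1), mem_connectedComponentIn (hmem _), hzW _ (by omega)⟩ (hmaps.mono_right ih)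
  exact ⟨U, hU, hUc, hzU, N, fun k hk => hinj.mono (hsub (k + 1) (by omega))⟩

theorem exists_connectedComponentIn_preimage_ball_subset_ball_of_ne_on_sphere {E Y : Type*}
    [NormedAddCommGroup E] [NormedSpace ℝ E] [Nontrivial E] [ProperSpace E] [MetricSpace Y]
    {f : E → Y} (hf : Continuous f) {w : E} {η : ℝ} (hη : 0 < η)
    (hsph : ∀ x ∈ sphere w η, f x ≠ f w) :
    ∃ δ > 0, connectedComponentIn (f ⁻¹' ball (f w) δ) w ⊆ ball w η := by
  obtain ⟨x₀, hx₀, hmin⟩ := (isCompact_sphere w η).exists_isMinOn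
    (NormedSpace.sphere_nonempty.mpr hη.le) (hf.dist continuous_const).continuousOn
  have hδ : 0 < dist (f x₀) (f w) := dist_pos.mpr (hsph x₀ hx₀)
  have hmiss : f ⁻¹' ball (f w) (dist (f x₀) (f w)) ⊆ ball w η ∪ (closedBall w η)ᶜ := by
    intro x hx
    rcases lt_trichotomy (dist x w) η with h | h | h
    · exact Or.inl h
    · have hle : dist (f x₀) (f w) ≤ dist (f x) (f w) := hmin (show x ∈ sphere w η from h)
      exact absurd hx (not_lt.mpr hle)
    · exact Or.inr (not_le.mpr h)
  exact ⟨_, hδ, isPreconnected_connectedComponentIn.subset_left_of_subset_union isOpen_ball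
    isClosed_closedBall.isOpen_compl (disjoint_compl_right.mono_left ball_subset_closedBall)
    ((connectedComponentIn_subset _ _).trans hmiss)
    ⟨w, mem_connectedComponentIn (by simpa using hδ), mem_ball_self hη⟩⟩

theorem Differentiable.exists_connectedComponentIn_preimage_ball_subset_ball {f : ℂ → ℂ}
    (hf : Differentiable ℂ f) {w : ℂ} (hne : ∃ x, f x ≠ f w) {ε : ℝ} (hε : 0 < ε) :
    ∃ δ > 0, connectedComponentIn (f ⁻¹' ball (f w) δ) w ⊆ ball w ε := by
  have hiso : ∀ᶠ x in 𝓝[≠] w, f x ≠ f w := by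
    refine ((hf.analyticAt w).eventually_eq_or_eventually_ne analyticAt_const).resolve_left ?_
    intro heq
    obtain ⟨x, hx⟩ := hne
    exact hx (congrFun (AnalyticOnNhd.eq_of_eventuallyEq (fun x _ => hf.analyticAt x)
      analyticOnNhd_const heq) x)
  obtain ⟨ρ, hρ, hρw⟩ := Metric.eventually_nhds_iff.mp (eventually_nhdsWithin_iff.mp hiso)
  have hη : 0 < min ε ρ / 2 := by positivity
  obtain ⟨δ, hδ, hsub⟩ := exists_connectedComponentIn_preimage_ball_subset_ball_of_ne_on_sphere
    hf.continuous hη fun x hx =>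
      hρw (by rw [mem_sphere.mp hx]; linarith [min_le_right ε ρ]) (ne_of_mem_sphere hx hη.ne')
  exact ⟨δ, hδ, hsub.trans (ball_subset_ball (by linarith [min_le_left ε ρ]))⟩

section Quadratic

variable {c β : ℂ}

theorem sq_add_sub_of_fixedPoint (hfix : β ^ 2 + c = β) (x : ℂ) :
    x ^ 2 + c - β = (x - β) * (x + β) := by
  linear_combination hfix

theorem two_mul_norm_le_norm_sub_add_norm_add (β x : ℂ) : 2 * ‖β‖ ≤ ‖x - β‖ + ‖x + β‖ := by
  calc 2 * ‖β‖ = ‖(x + β) - (x - β)‖ := by rw [add_sub_sub_cancel, ← two_mul, norm_mul]; simp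
    _ ≤ ‖x + β‖ + ‖x - β‖ := norm_sub_le _ _
    _ = ‖x - β‖ + ‖x + β‖ := add_comm _ _

theorem injOn_sq_add_ball (c β : ℂ) : InjOn (fun x : ℂ => x ^ 2 + c) (ball β ‖β‖) := by
  intro x hx y hy hxy
  have hsq : (x - y) * (x + y) = 0 := by
    simp only at hxy
    linear_combination hxy
  rcases mul_eq_zero.mp hsq with h | h
  · exact sub_eq_zero.mp h
  · have hfar : 2 * ‖β‖ ≤ ‖x - β‖ + ‖y - β‖ :=
      calc 2 * ‖β‖ = ‖(x - β) + (y - β)‖ := by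
            rw [show (x - β) + (y - β) = -(2 * β) by linear_combination h, norm_neg, norm_mul]
            simp
        _ ≤ ‖x - β‖ + ‖y - β‖ := norm_add_le _ _
    rw [mem_ball, dist_eq_norm] at hx hy
    linarith

theorem subset_ball_of_mapsTo_sq_add (hfix : β ^ 2 + c = β) {r : ℝ} (hr0 : 0 ≤ r) (hr1 : r ≤ 1)
    (hrβ : r ≤ 2 * ‖β‖ - 1) {C : Set ℂ} (hC : IsPreconnected C)
    (hCW : (C ∩ ball β (r ^ 2)).Nonempty) (hmaps : MapsTo (fun x => x ^ 2 + c) C (ball β (r ^ 2))) :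
    C ⊆ ball β (r ^ 2) := by
  have hprod : ∀ x ∈ C, ‖x - β‖ * ‖x + β‖ < r ^ 2 := fun x hx => by
    simpa [mem_ball, dist_eq_norm, sq_add_sub_of_fixedPoint hfix, norm_mul] using hmaps hx
  have hsplit : C ⊆ ball β r ∪ ball (-β) r := by
    intro x hx
    by_contra h
    simp only [mem_union, mem_ball, dist_eq_norm, sub_neg_eq_add, not_or, not_lt] at h
    nlinarith [hprod x hx, mul_le_mul h.1 h.2 hr0 (norm_nonneg _)]
  have hdisj : Disjoint (ball β r) (ball (-β) r) := ball_disjoint_ball <| by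
    rw [dist_eq_norm, sub_neg_eq_add, ← two_mul, ← two_mul, norm_mul]
    norm_num
    linarith
  have hCr : C ⊆ ball β r := hC.subset_left_of_subset_union isOpen_ball isOpen_ball hdisj hsplit
    (hCW.mono (inter_subset_inter_right _ (ball_subset_ball (by nlinarith))))
  intro x hx
  have hxr := hCr hx
  rw [mem_ball, dist_eq_norm] at hxr ⊢
  have hfac : 1 ≤ ‖x + β‖ := by linarith [two_mul_norm_le_norm_sub_add_norm_add β x]
  calc ‖x - β‖ ≤ ‖x - β‖ * ‖x + β‖ := le_mul_of_one_le_right (norm_nonneg _) hfac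
    _ < r ^ 2 := hprod x hx

theorem isRegularOrbit_sq_add_of_tendsto (hfix : β ^ 2 + c = β) (hβ : 1 / 2 < ‖β‖)
    {z : ℕ → ℂ} (hz : ∀ k, z (k + 1) ^ 2 + c = z k) (hlim : Tendsto z atTop (𝓝 β)) :
    IsRegularOrbit (fun x => x ^ 2 + c) z := by
  set p : ℂ → ℂ := fun x => x ^ 2 + c
  set r := min 1 (2 * ‖β‖ - 1)
  have hr0 : 0 < r := lt_min one_pos (by linarith)
  have hr1 : r ≤ 1 := min_le_left _ _
  have hrβ : r ≤ 2 * ‖β‖ - 1 := min_le_right _ _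
  have hp : Differentiable ℂ p := (differentiable_pow 2).add_const c
  have hsurj : Function.Surjective p := fun w => by
    obtain ⟨x, hx⟩ := IsAlgClosed.exists_pow_nat_eq (w - c) two_pos
    exact ⟨x, by simp [p, hx]⟩
  have hr2 : 0 < r ^ 2 := by positivity
  obtain ⟨N, hN⟩ := eventually_atTop.mp (hlim.eventually (ball_mem_nhds β hr2))
  obtain ⟨ε, hε, hεW⟩ := Metric.isOpen_iff.mp isOpen_ball (z N) (hN N le_rfl)
  have hnonconst : ∃ x, p^[N] x ≠ p^[N] (z N) := by
    obtain ⟨x, hx⟩ := hsurj.iterate N (p^[N] (z N) + 1)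
    exact ⟨x, by simp [hx]⟩
  obtain ⟨δ, hδ, hsub⟩ :=
    (hp.iterate N).exists_connectedComponentIn_preimage_ball_subset_ball hnonconst hε
  rw [iterate_apply_of_backwardOrbit hz] at hsub
  exact isRegularOrbit_of_mapsTo_trap hp.continuous hz isOpen_ball (isConnected_ball hδ)
    (mem_ball_self hδ) ((injOn_sq_add_ball c β).mono (ball_subset_ball (by nlinarith)))
    (fun _ hC hCW hmaps => subset_ball_of_mapsTo_sq_add hfix hr0.le hr1 hrβ hC hCW hmaps) hN
    (hsub.trans hεW)

end Quadratic

section Koenigs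

variable {𝕜 X : Type*} [NontriviallyNormedField 𝕜] {p : X → X} {φ : 𝕜 → X} {lam : 𝕜}

theorem mul_div_pow_succ_eq_div_pow (hlam : lam ≠ 0) (z : 𝕜) (k : ℕ) :
    lam * (z / lam ^ (k + 1)) = z / lam ^ k := by
  rw [pow_succ]
  field_simp

theorem tendsto_div_pow_atTop_nhds_zero (hrep : 1 < ‖lam‖) (z : 𝕜) :
    Tendsto (fun k : ℕ => z / lam ^ k) atTop (𝓝 0) := by
  have h := (tendsto_pow_atTop_nhds_zero_of_norm_lt_one (x := lam⁻¹)
    (by rw [norm_inv]; exact inv_lt_one_of_one_lt₀ hrep)).const_mul z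
  rw [mul_zero] at h
  simpa [div_eq_mul_inv, inv_pow] using h

def koenigsLift (hlam : lam ≠ 0) (hfe : ∀ z, p (φ z) = φ (lam * z)) (z : 𝕜) : NatExt p :=
  ⟨fun k => φ (z / lam ^ k), fun k => by rw [hfe, mul_div_pow_succ_eq_div_pow hlam]⟩

variable (hlam : lam ≠ 0) (hfe : ∀ z, p (φ z) = φ (lam * z))
include hlam hfe

theorem koenigsLift_apply (z : 𝕜) (k : ℕ) : (koenigsLift hlam hfe z).1 k = φ (z / lam ^ k) :=
  rfl

theorem koenigsLift_zero : (koenigsLift hlam hfe 0).1 = fun _ => φ 0 :=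
  funext fun k => by rw [koenigsLift_apply, zero_div]

theorem continuous_koenigsLift [TopologicalSpace X] (hφ : Continuous φ) :
    Continuous (koenigsLift hlam hfe) :=
  (continuous_pi fun _ => hφ.comp (continuous_id.div_const _)).subtype_mk _

theorem tendsto_koenigsLift [TopologicalSpace X] (hrep : 1 < ‖lam‖) (hφ : ContinuousAt φ 0)
    (z : 𝕜) : Tendsto (koenigsLift hlam hfe z).1 atTop (𝓝 (φ 0)) :=
  hφ.tendsto.comp (tendsto_div_pow_atTop_nhds_zero hrep z)

theorem koenigsLift_injective (hrep : 1 < ‖lam‖) {g : X → 𝕜} (hg : ∀ᶠ x in 𝓝 0, g (φ x) = x) :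
    Function.Injective (koenigsLift hlam hfe) := by
  intro z w h
  obtain ⟨K, hK⟩ := eventually_atTop.mp
    (((tendsto_div_pow_atTop_nhds_zero hrep z).eventually hg).and
      ((tendsto_div_pow_atTop_nhds_zero hrep w).eventually hg))
  have hK' : z / lam ^ K = w / lam ^ K := by
    rw [← (hK K le_rfl).1, ← (hK K le_rfl).2]
    exact congrArg g (congrFun (congrArg Subtype.val h) K)
  exact (div_left_inj' (pow_ne_zero K hlam)).mp hK'

end Koenigs

theorem koenigs_leaf_parabolic_general (c β lam : ℂ) (p : ℂ → ℂ) (hp : p = fun z => z ^ 2 + c)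
    (hfix : p β = β) (hlam : lam = deriv p β) (hrep : 1 < ‖lam‖)
    (φ : ℂ → ℂ) (hφ : Differentiable ℂ φ) (hφ0 : φ 0 = β) (hφ' : deriv φ 0 = 1)
    (hfe : ∀ z, p (φ z) = φ (lam * z)) :
    ∃ Φ : ℂ → NatExt p,
      (∀ z k, (Φ z).1 k = φ (z / lam ^ k)) ∧
      Continuous Φ ∧ Function.Injective Φ ∧ IsPathConnected (Set.range Φ) ∧
      (∀ z, IsRegularOrbit p ((Φ z).1)) ∧ (Φ 0).1 = fun _ => β := by
  subst hp
  have hlam0 : lam ≠ 0 := norm_pos_iff.mp (one_pos.trans hrep)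
  have hβ : 1 / 2 < ‖β‖ := by
    have hlam_eq : lam = 2 * β := by simp [hlam]
    rw [hlam_eq, norm_mul] at hrep
    norm_num at hrep
    linarith
  have hφ_inv := (hφ' ▸ (hφ.analyticAt 0).hasStrictDerivAt).eventually_left_inverse one_ne_zero
  let Φ : ℂ → NatExt (fun z : ℂ => z ^ 2 + c) := koenigsLift hlam0 hfe
  have hΦ : Continuous Φ := continuous_koenigsLift hlam0 hfe hφ.continuous
  exact ⟨Φ, koenigsLift_apply hlam0 hfe, hΦ, koenigsLift_injective hlam0 hfe hrep hφ_inv,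
    isPathConnected_range hΦ, fun z => isRegularOrbit_sq_add_of_tendsto hfix hβ (Φ z).2
      (hφ0 ▸ tendsto_koenigsLift hlam0 hfe hrep hφ.continuous.continuousAt z),
    by rw [koenigsLift_zero, hφ0]⟩

/-- **The Koenigs leaf of a repelling fixed point is parabolic.** Let `p(z) = z² + c` have
connected Julia set, let `β` be a repelling fixed point with multiplier `λ = p'(β)`,
`|λ| > 1`, and Koenigs linearization `φ` (`φ(0) = β`, `φ'(0) = 1`, `p∘φ(z) = φ(λz)`).
Then `Φ : z ↦ (φ(z), φ(z/λ), φ(z/λ²), …)` is a well-defined continuous injection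
`ℂ → N_p` whose image is a path-connected set of regular backward orbits containing the
invariant lift of `β`; in particular the leaf of the invariant lift of `β` is a parabolic
Riemann surface (the injective continuous image of `ℂ`). -/
theorem koenigs_leaf_parabolic (c β lam : ℂ) (p : ℂ → ℂ) (hp : p = fun z => z ^ 2 + c)
    (hconn : IsConnected (frontier (filledJulia p)))
    (hfix : p β = β) (hlam : lam = deriv p β) (hrep : 1 < ‖lam‖)
    (φ : ℂ → ℂ) (hφ : Differentiable ℂ φ) (hφ0 : φ 0 = β) (hφ' : deriv φ 0 = 1)
    (hfe : ∀ z, p (φ z) = φ (lam * z)) :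
    ∃ Φ : ℂ → NatExt p,
      (∀ z k, (Φ z).1 k = φ (z / lam ^ k)) ∧
      Continuous Φ ∧ Function.Injective Φ ∧ IsPathConnected (Set.range Φ) ∧
      (∀ z, IsRegularOrbit p ((Φ z).1)) ∧ (Φ 0).1 = fun _ => β :=
  koenigs_leaf_parabolic_general c β lam p hp hfix hlam hrep φ hφ hφ0 hφ' hfe
end
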